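/- If τ : A → Q(H) is a unital injective extension of a unital separable C*-algebra A admitting a completely positive lifting ψ : A → B(H), then via Stinespring dilation ψ(a) = V*φ(a)V with φ a nondegenerate representation on H₀ and V an isometry, the projection P₁ = VV* essentially commutes with φ(A) (i.e., [P₁, φ(a)] is compact for all a ∈ A), and τ is unitarily equivalent to the compression extension a ↦ π(P₁φ(a)P₁) on P₁H₀. -/

import Mathlib

/-!
Write `P = VV*`. Conjugating by `V` turns `ψ` into the compression `P φ(·) P`, so the compression
is multiplicative modulo compacts. Its multiplicativity defect `P φ(a*) φ(a) P - P φ(a*) P φ(a) P`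
equals `T* T` for the corner `T = (1 - P) φ(a) P`, and `T* T` compact forces `T` compact because
`‖T x‖² ≤ ‖T* T x‖ ‖x‖`. The commutator `[P, φ(a)]` is the difference of the two off-diagonal
corners, and the other corner is the adjoint of the one for `a*`.
-/

open ContinuousLinearMap

theorem IsStarProjection.mul_star_mul_mul_sub_mul {R : Type*} [Ring R] [StarRing R] {p : R}
    (hp : IsStarProjection p) (x : R) :
    p * star x * x * p - p * star x * p * x * p =
      star ((1 - p) * x * p) * ((1 - p) * x * p) := by
  have hpp : p * p = p := hp.isIdempotentElem
  have hsp : star p = p := hp.isSelfAdjoint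
  simp only [star_mul, star_sub, hsp, mul_assoc, sub_mul, mul_sub, one_mul]
  simp only [← mul_assoc, hpp]
  noncomm_ring

theorem totallyBounded_image_of_forall_dist_lt {α β γ : Type*} [PseudoMetricSpace β]
    [PseudoMetricSpace γ] {f : α → β} {g : α → γ} {s : Set α} (hg : TotallyBounded (g '' s))
    (hfg : ∀ ε > 0, ∃ δ > 0, ∀ x ∈ s, ∀ y ∈ s, dist (g x) (g y) < δ → dist (f x) (f y) < ε) :
    TotallyBounded (f '' s) := by
  refine Metric.totallyBounded_iff.mpr fun ε hε => ?_
  obtain ⟨δ, hδ, hδε⟩ := hfg ε hε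
  obtain ⟨u, hus, huf, hcover⟩ := Set.exists_subset_image_finite_and.mp
    (Metric.finite_approx_of_totallyBounded hg δ hδ)
  refine ⟨f '' u, huf.image f, ?_⟩
  rintro _ ⟨x, hx, rfl⟩
  obtain ⟨_, ⟨y, hy, rfl⟩, hxy⟩ := Set.mem_iUnion₂.mp (hcover ⟨x, hx, rfl⟩)
  exact Set.mem_iUnion₂.mpr ⟨f y, ⟨y, hy, rfl⟩, hδε x hx y (hus hy) hxy⟩

section Hilbert

variable {𝕜 E F : Type*} [RCLike 𝕜] [NormedAddCommGroup E] [InnerProductSpace 𝕜 E]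
  [CompleteSpace E] [NormedAddCommGroup F] [InnerProductSpace 𝕜 F] [CompleteSpace F]

theorem norm_apply_sq_le_norm_adjoint_comp_self_apply_mul_norm (T : E →L[𝕜] F) (x : E) :
    ‖T x‖ ^ 2 ≤ ‖(adjoint T ∘L T) x‖ * ‖x‖ := by
  rw [apply_norm_sq_eq_inner_adjoint_left]
  exact (RCLike.re_le_norm _).trans (norm_inner_le_norm _ _)

theorem IsCompactOperator.of_adjoint_comp_self {T : E →L[𝕜] F}
    (h : IsCompactOperator (adjoint T ∘L T)) : IsCompactOperator T := by
  rw [← T.coe_coe,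
    isCompactOperator_iff_isCompact_closure_image_closedBall (T : E →ₗ[𝕜] F) one_pos]
  refine (TotallyBounded.closure ?_).isCompact_of_isClosed isClosed_closure
  refine totallyBounded_image_of_forall_dist_lt
    ((h.isCompact_closure_image_closedBall 1).totallyBounded.subset subset_closure)
    fun ε hε => ⟨ε ^ 2 / 2, by positivity, fun x hx y hy hxy => ?_⟩
  rw [Metric.mem_closedBall, dist_zero_right] at hx hy
  rw [dist_eq_norm, ← map_sub] at hxy ⊢
  refine lt_of_pow_lt_pow_left₀ 2 hε.le ?_
  calc ‖T (x - y)‖ ^ 2 ≤ ‖(adjoint T ∘L T) (x - y)‖ * ‖x - y‖ :=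
        norm_apply_sq_le_norm_adjoint_comp_self_apply_mul_norm T (x - y)
    _ ≤ ‖(adjoint T ∘L T) (x - y)‖ * 2 := by
        gcongr
        linarith [norm_sub_le x y]
    _ < ε ^ 2 / 2 * 2 := mul_lt_mul_of_pos_right hxy two_pos
    _ = ε ^ 2 := by ring

theorem IsCompactOperator.adjoint {T : E →L[𝕜] F} (h : IsCompactOperator T) :
    IsCompactOperator (ContinuousLinearMap.adjoint T) :=
  .of_adjoint_comp_self <| by
    rw [adjoint_adjoint]
    exact h.comp_clm _

theorem isStarProjection_comp_adjoint {V : E →L[𝕜] F} (hV : adjoint V ∘L V = 1) :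
    IsStarProjection (V ∘L adjoint V) where
  isIdempotentElem := by
    rw [IsIdempotentElem, mul_def, comp_assoc, ← comp_assoc (adjoint V), hV, one_def, id_comp]
  isSelfAdjoint := by
    rw [IsSelfAdjoint, star_eq_adjoint, adjoint_comp, adjoint_adjoint]

variable {P : E →L[𝕜] E}

theorem IsStarProjection.isCompactOperator_one_sub_mul_mul (hP : IsStarProjection P)
    (X : E →L[𝕜] E)
    (hX : IsCompactOperator ⇑(P * star X * X * P - P * star X * P * X * P)) :
    IsCompactOperator ⇑((1 - P) * X * P) := by
  rw [hP.mul_star_mul_mul_sub_mul, star_eq_adjoint] at hX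
  exact .of_adjoint_comp_self hX

theorem IsStarProjection.isCompactOperator_commutator (hP : IsStarProjection P)
    {X : E →L[𝕜] E} (hX : IsCompactOperator ⇑((1 - P) * X * P))
    (hX' : IsCompactOperator ⇑((1 - P) * star X * P)) :
    IsCompactOperator ⇑(P * X - X * P) := by
  have hsP : star P = P := hP.isSelfAdjoint
  have key : P * X - X * P = star ((1 - P) * star X * P) - (1 - P) * X * P := by
    simp only [star_mul, star_sub, star_one, star_star, hsP]
    noncomm_ring
  rw [key, star_eq_adjoint]
  exact hX'.adjoint.sub hX

end Hilbert

open ContinuousLinearMap in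
theorem stmt16_general
    {H : Type*} [NormedAddCommGroup H] [InnerProductSpace ℂ H] [CompleteSpace H]
    {H₀ : Type*} [NormedAddCommGroup H₀] [InnerProductSpace ℂ H₀] [CompleteSpace H₀]
    {A : Type*} [NormedRing A] [StarRing A]
    [NormedAlgebra ℂ A]
    (ψ : A → (H →L[ℂ] H))
    (hψmul : ∀ a b : A, IsCompactOperator ⇑(ψ (a * b) - ψ a * ψ b))
    (φ : A →⋆ₐ[ℂ] (H₀ →L[ℂ] H₀))
    (V : H →L[ℂ] H₀)
    (hViso : adjoint V ∘L V = 1)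
    (hStine : ∀ a : A, ψ a = adjoint V ∘L φ a ∘L V) :
    (∀ a : A,
      IsCompactOperator ⇑((V ∘L adjoint V) * φ a - φ a * (V ∘L adjoint V))) ∧
    (∀ a : A,
      V ∘L ψ a ∘L adjoint V =
        (V ∘L adjoint V) * φ a * (V ∘L adjoint V)) := by
  have hP := isStarProjection_comp_adjoint hViso
  have hcompression : ∀ a, V ∘L ψ a ∘L adjoint V = (V ∘L adjoint V) * φ a * (V ∘L adjoint V) :=
    fun a => by rw [hStine]; rfl
  have hoff : ∀ a, IsCompactOperator ⇑((1 - V ∘L adjoint V) * φ a * (V ∘L adjoint V)) := by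
    intro a
    refine hP.isCompactOperator_one_sub_mul_mul _ ?_
    have hdefect : V ∘L adjoint V * φ (star a) * φ a * (V ∘L adjoint V) -
        V ∘L adjoint V * φ (star a) * (V ∘L adjoint V) * φ a * (V ∘L adjoint V) =
        V ∘L (ψ (star a * a) - ψ (star a) * ψ a) ∘L adjoint V := by
      simp only [hStine, map_mul, mul_def, comp_sub, sub_comp, comp_assoc]
    rw [← map_star, hdefect]
    exact ((hψmul (star a) a).comp_clm (adjoint V)).clm_comp V
  refine ⟨fun a => hP.isCompactOperator_commutator (hoff a) ?_, hcompression⟩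
  simpa only [map_star] using hoff (star a)

open ContinuousLinearMap in
/-- if `τ = π ∘ ψ` is a unital injective extension with a
completely positive lift `ψ`, written via Stinespring as `ψ(a) = V*φ(a)V`
with `φ` a representation and `V` an isometry, then `P₁ = VV*` essentially
commutes with `φ(A)`, and `τ` is unitarily equivalent (via `V`, regarded as a
unitary onto `P₁H₀`) to the compression extension `a ↦ π(P₁φ(a)P₁)`. -/
theorem stmt16
    {H : Type*} [NormedAddCommGroup H] [InnerProductSpace ℂ H] [CompleteSpace H]
    {H₀ : Type*} [NormedAddCommGroup H₀] [InnerProductSpace ℂ H₀] [CompleteSpace H₀]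
    {A : Type*} [NormedRing A] [StarRing A] [CStarRing A]
    [NormedAlgebra ℂ A] [StarModule ℂ A] [TopologicalSpace.SeparableSpace A]
    (ψ : A → (H →L[ℂ] H))
    (hψ1 : ψ 1 = 1)
    (hψmul : ∀ a b : A, IsCompactOperator ⇑(ψ (a * b) - ψ a * ψ b))
    (hψstar : ∀ a : A, IsCompactOperator ⇑(ψ (star a) - star (ψ a)))
    (hψinj : ∀ a : A, IsCompactOperator ⇑(ψ a) → a = 0)
    (φ : A →⋆ₐ[ℂ] (H₀ →L[ℂ] H₀))
    (V : H →L[ℂ] H₀)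
    (hViso : adjoint V ∘L V = 1)
    (hStine : ∀ a : A, ψ a = adjoint V ∘L φ a ∘L V) :
    (∀ a : A,
      IsCompactOperator ⇑((V ∘L adjoint V) * φ a - φ a * (V ∘L adjoint V))) ∧
    (∀ a : A,
      V ∘L ψ a ∘L adjoint V =
        (V ∘L adjoint V) * φ a * (V ∘L adjoint V)) :=
  stmt16_general ψ hψmul φ V hViso hStine
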